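/- Let Z be a metric space, z ∈ Z, and for subsets X, Y ⊆ Z define H_z(X,Y) as the infimum over 0 < ε < 1/2 such that X ∩ B(z,1/ε) ⊆ B(Y,ε) and Y ∩ B(z,1/ε) ⊆ B(X,ε) (with value 1/2 if no such ε exists). Then H_z is a pseudometric on the power set of Z and a metric on the collection of closed subsets of Z; moreover if Z is complete then the closed subsets of Z with H_z form a complete metric space. -/
import Mathlib


open Metric

/-- The pointed local Hausdorff distance `H_z(A,B)` (with respect to a distance
function `ζ`): the infimum over `0 < ε < 1/2` for which
`A ∩ B(z,1/ε) ⊆ B(B,ε)` and `B ∩ B(z,1/ε) ⊆ B(A,ε)`, with value `1/2` if no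
such `ε` exists. -/
noncomputable def HzGen {α : Type*} (ζ : α → α → ℝ) (z : α) (A B : Set α) : ℝ :=
  sInf ({1/2} ∪ {ε : ℝ | 0 < ε ∧ ε < 1/2 ∧
    (∀ a ∈ A, ζ z a ≤ 1/ε → ∃ b ∈ B, ζ a b ≤ ε) ∧
    (∀ b ∈ B, ζ z b ≤ 1/ε → ∃ a ∈ A, ζ b a ≤ ε)})

section aux
variable {Z : Type*} [MetricSpace Z] (z : Z)

/-- The defining property. -/
def HzP (z : Z) (ε : ℝ) (A B : Set Z) : Prop :=
  0 < ε ∧ ε < 1/2 ∧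
    (∀ a ∈ A, dist z a ≤ 1/ε → ∃ b ∈ B, dist a b ≤ ε) ∧
    (∀ b ∈ B, dist z b ≤ 1/ε → ∃ a ∈ A, dist b a ≤ ε)

lemma HzGen_eq (A B : Set Z) :
    HzGen dist z A B = sInf ({1/2} ∪ {ε | HzP z ε A B}) := rfl

lemma Hz_bdd (A B : Set Z) : BddBelow ({(1:ℝ)/2} ∪ {ε | HzP z ε A B}) := by
  refine ⟨0, ?_⟩
  rintro x (hx | hx)
  · simp only [Set.mem_singleton_iff] at hx; norm_num [hx]
  · exact hx.1.le

lemma Hz_ne (A B : Set Z) : ({(1:ℝ)/2} ∪ {ε | HzP z ε A B}).Nonempty :=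
  ⟨1/2, Or.inl rfl⟩

lemma HzGen_nonneg (A B : Set Z) : 0 ≤ HzGen dist z A B :=
  le_csInf (Hz_ne z A B) (by
    rintro x (hx | hx)
    · simp only [Set.mem_singleton_iff] at hx; norm_num [hx]
    · exact hx.1.le)

lemma HzGen_le_half (A B : Set Z) : HzGen dist z A B ≤ 1/2 :=
  csInf_le (Hz_bdd z A B) (Or.inl rfl)

lemma HzGen_le_of_P {ε : ℝ} {A B : Set Z} (h : HzP z ε A B) : HzGen dist z A B ≤ ε :=
  csInf_le (Hz_bdd z A B) (Or.inr h)

lemma exists_P_of_lt {t : ℝ} {A B : Set Z} (h : HzGen dist z A B < t) (ht : t ≤ 1/2) :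
    ∃ ε, ε < t ∧ HzP z ε A B := by
  obtain ⟨ε, hmem, hlt⟩ := exists_lt_of_csInf_lt (Hz_ne z A B) h
  rcases hmem with hε | hε
  · simp only [Set.mem_singleton_iff] at hε; exact absurd (hε ▸ hlt) (not_lt.2 ht)
  · exact ⟨ε, hlt, hε⟩

lemma aux_ineq {u v : ℝ} (hu : 0 < u) (hv : 0 < v) (h : u + v < 1/2) :
    1/(u+v) + u ≤ 1/v := by
  rw [div_add' _ _ _ (by positivity), div_le_div_iff₀ (by positivity) hv]
  nlinarith [mul_pos hu hv, mul_pos (mul_pos hu hv) (add_pos hu hv)]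

end aux

section main
variable {Z : Type*} [MetricSpace Z] (z : Z)

lemma HzGen_self (A : Set Z) : HzGen dist z A A = 0 := by
  refine le_antisymm ?_ (HzGen_nonneg z A A)
  refine le_of_forall_pos_le_add fun δ hδ => ?_
  have hP : HzP z (min (δ/2) (1/4)) A A := by
    refine ⟨by positivity, lt_of_le_of_lt (min_le_right _ _) (by norm_num), ?_, ?_⟩ <;>
      exact fun a ha _ => ⟨a, ha, by simp [le_min_iff]; positivity⟩
  calc HzGen dist z A A ≤ min (δ/2) (1/4) := HzGen_le_of_P z hP
    _ ≤ 0 + δ := by rw [zero_add]; exact (min_le_left _ _).trans (by linarith)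

lemma HzP_comm {ε : ℝ} {A B : Set Z} : HzP z ε A B ↔ HzP z ε B A := by
  unfold HzP; tauto

lemma HzGen_comm (A B : Set Z) : HzGen dist z A B = HzGen dist z B A := by
  rw [HzGen_eq, HzGen_eq]
  congr 1
  ext ε
  simp only [Set.mem_union, Set.mem_setOf_eq, HzP_comm z (A := A) (B := B)]

lemma HzGen_triangle (A B C : Set Z) :
    HzGen dist z A C ≤ HzGen dist z A B + HzGen dist z B C := by
  set d1 := HzGen dist z A B with hd1
  set d2 := HzGen dist z B C with hd2
  rcases le_or_gt (1/2 : ℝ) (d1 + d2) with h | h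
  · exact (HzGen_le_half z A C).trans h
  refine le_of_forall_pos_le_add fun δ hδ => ?_
  set δ₀ : ℝ := min (δ/2) ((1/2 - (d1 + d2))/2) with hδ₀
  have hδ₀pos : 0 < δ₀ := lt_min (by linarith) (by linarith)
  obtain ⟨ε1, hε1lt, hP1⟩ := exists_P_of_lt z (show d1 < d1 + δ₀ by linarith)
    (by have := HzGen_nonneg z B C; have : δ₀ ≤ (1/2 - (d1+d2))/2 := min_le_right _ _; linarith [HzGen_nonneg z B C])
  obtain ⟨ε2, hε2lt, hP2⟩ := exists_P_of_lt z (show d2 < d2 + δ₀ by linarith)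
    (by have : δ₀ ≤ (1/2 - (d1+d2))/2 := min_le_right _ _; linarith [HzGen_nonneg z A B])
  have hs : ε1 + ε2 < d1 + d2 + 2 * δ₀ := by linarith
  have hhalf : ε1 + ε2 < 1/2 := by
    have : δ₀ ≤ (1/2 - (d1+d2))/2 := min_le_right _ _; linarith
  have hε1 := hP1.1
  have hε2 := hP2.1
  have hspos : 0 < ε1 + ε2 := by linarith
  have hP : HzP z (ε1 + ε2) A C := by
    refine ⟨hspos, hhalf, ?_, ?_⟩
    · intro a ha hza
      have h1 : dist z a ≤ 1/ε1 :=
        hza.trans (one_div_le_one_div_of_le hε1 (by linarith))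
      obtain ⟨b, hb, hab⟩ := hP1.2.2.1 a ha h1
      have h2 : dist z b ≤ 1/ε2 := by
        have := aux_ineq hε1 hε2 hhalf
        calc dist z b ≤ dist z a + dist a b := dist_triangle z a b
          _ ≤ 1/(ε1+ε2) + ε1 := by linarith
          _ ≤ 1/ε2 := this
      obtain ⟨c, hc, hbc⟩ := hP2.2.2.1 b hb h2
      exact ⟨c, hc, (dist_triangle a b c).trans (by linarith)⟩
    · intro c hc hzc
      have h1 : dist z c ≤ 1/ε2 :=
        hzc.trans (one_div_le_one_div_of_le hε2 (by linarith))
      obtain ⟨b, hb, hcb⟩ := hP2.2.2.2 c hc h1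
      have h2 : dist z b ≤ 1/ε1 := by
        have := aux_ineq hε2 hε1 (by linarith)
        calc dist z b ≤ dist z c + dist c b := dist_triangle z c b
          _ ≤ 1/(ε1+ε2) + ε2 := by rw [show ε1+ε2 = ε2+ε1 by ring] at *; linarith
          _ ≤ 1/ε1 := by rw [show ε1+ε2 = ε2+ε1 by ring]; exact this
      obtain ⟨a, hab, hba⟩ := hP1.2.2.2 b hb h2
      exact ⟨a, hab, (dist_triangle c b a).trans (by linarith)⟩
  calc HzGen dist z A C ≤ ε1 + ε2 := HzGen_le_of_P z hP
    _ ≤ d1 + d2 + δ := by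
        have : δ₀ ≤ δ/2 := min_le_left _ _; linarith

lemma HzGen_eq_zero_closed {A B : Set Z} (hA : IsClosed A) (hB : IsClosed B)
    (h : HzGen dist z A B = 0) : A = B := by
  have key : ∀ (X Y : Set Z), HzGen dist z X Y = 0 → ∀ a ∈ X, a ∈ closure Y := by
    intro X Y hXY a ha
    rw [Metric.mem_closure_iff]
    intro r hr
    set t : ℝ := min (r/2) (min (1/4) (1/(dist z a + 1))) with ht
    have htpos : 0 < t := by
      refine lt_min (by linarith) (lt_min (by norm_num) ?_)
      positivity
    obtain ⟨ε, hεlt, hP⟩ := exists_P_of_lt z (hXY ▸ htpos)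
      ((min_le_right _ _).trans ((min_le_left _ _).trans (by norm_num)))
    have hεpos := hP.1
    have hza : dist z a ≤ 1/ε := by
      have h1 : ε < 1/(dist z a + 1) := hεlt.trans_le ((min_le_right _ _).trans (min_le_right _ _))
      have h2 : dist z a + 1 < 1/ε := by
        rw [lt_div_iff₀ hεpos]
        rw [lt_div_iff₀ (by positivity : (0:ℝ) < dist z a + 1)] at h1
        linarith
      linarith
    obtain ⟨b, hb, hab⟩ := hP.2.2.1 a ha hza
    exact ⟨b, hb, hab.trans_lt (hεlt.trans_le ((min_le_left _ _).trans (by linarith)))⟩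
  apply Set.Subset.antisymm
  · intro a ha; rw [← hB.closure_eq]; exact key A B h a ha
  · intro b hb; rw [← hA.closure_eq]
    exact key B A ((HzGen_comm z B A).trans h) b hb

lemma HzGen_complete [CompleteSpace Z] (F : ℕ → Set Z)
    (hcauchy : ∀ ε : ℝ, 0 < ε → ∃ N, ∀ m ≥ N, ∀ n ≥ N, HzGen dist z (F m) (F n) < ε) :
    ∃ C : Set Z, IsClosed C ∧
      Filter.Tendsto (fun n => HzGen dist z (F n) C) Filter.atTop (nhds 0) := by
  classical
  set C : Set Z := ⋂ M : ℕ, closure (⋃ p, ⋃ (_ : M ≤ p), F p) with hC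
  have hCclosed : IsClosed C := isClosed_iInter fun _ => isClosed_closure
  have main : ∀ ε : ℝ, 0 < ε → ε < 1/4 →
      ∃ N, ∀ n ≥ N, HzGen dist z (F n) C ≤ 2 * ε := by
    intro ε hε hε4
    choose g hg using fun k : ℕ => hcauchy (ε * (1/2)^(k+1)) (by positivity)
    set ψ : ℕ → ℕ := fun k => Nat.rec (g 0) (fun k p => max (g (k+1)) p) k with hψ
    have hψsucc : ∀ k, ψ (k+1) = max (g (k+1)) (ψ k) := fun k => rfl
    have hψmono : Monotone ψ :=
      monotone_nat_of_le_succ fun k => (hψsucc k) ▸ le_max_right _ _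
    have hgψ : ∀ k, g k ≤ ψ k := by
      intro k
      cases k with
      | zero => exact le_refl _
      | succ k => exact (hψsucc k) ▸ le_max_left _ _
    have hbound : ∀ k : ℕ, ε * (1/2)^(k+1) ≤ 1/2 := by
      intro k
      have h1 : (1/2:ℝ)^(k+1) ≤ 1 := pow_le_one₀ (by norm_num) (by norm_num)
      nlinarith
    refine ⟨ψ 0, fun n hn => ?_⟩
    -- Direction A : points of `F n` are close to `C`
    have dirA : ∀ a ∈ F n, dist z a ≤ 1/(2*ε) → ∃ c ∈ C, dist a c ≤ 2*ε := by
      intro a ha hza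
      set m : ℕ → ℕ := fun k => Nat.rec n (fun k p => max (p+1) (ψ (k+1))) k with hm
      have hmsucc : ∀ k, m (k+1) = max (m k + 1) (ψ (k+1)) := fun k => rfl
      have hmψ : ∀ k, ψ k ≤ m k := by
        intro k
        cases k with
        | zero => exact hn
        | succ k => exact (hmsucc k) ▸ le_max_right _ _
      have hmk : ∀ k, k ≤ m k := by
        intro k
        induction k with
        | zero => exact Nat.zero_le _
        | succ k ih =>
          have := (hmsucc k) ▸ le_max_left (m k + 1) (ψ (k+1))
          omega
      have hpair : ∀ k, HzGen dist z (F (m k)) (F (m (k+1))) < ε * (1/2)^(k+1) := by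
        intro k
        exact hg k _ ((hgψ k).trans (hmψ k)) _
          ((hgψ k).trans ((hψmono (Nat.le_succ k)).trans (hmψ (k+1))))
      have key2 : 1/(2*ε) + ε ≤ 2/ε := by
        rw [div_add' _ _ _ (by positivity), div_le_div_iff₀ (by positivity) hε]
        nlinarith [mul_pos hε hε, mul_lt_mul_of_pos_left hε4 hε,
          mul_nonneg (mul_nonneg hε.le hε.le) hε.le]
      have step : ∀ k (x : Z), x ∈ F (m k) → dist z x ≤ 1/(2*ε) + ε →
          ∃ y, y ∈ F (m (k+1)) ∧ dist x y ≤ ε * (1/2)^(k+1) := by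
        intro k x hx hdx
        obtain ⟨ε', hε'lt, hP⟩ := exists_P_of_lt z (hpair k) (hbound k)
        have hε'pos := hP.1
        have hε'le : ε' ≤ ε/2 := by
          have h1 : (1/2:ℝ)^(k+1) ≤ (1/2:ℝ)^1 :=
            pow_le_pow_of_le_one (by norm_num) (by norm_num) (by omega)
          nlinarith
        have hzx : dist z x ≤ 1/ε' := by
          have h2 : (1:ℝ)/(ε/2) ≤ 1/ε' := one_div_le_one_div_of_le hε'pos hε'le
          have h3 : (1:ℝ)/(ε/2) = 2/ε := by
            rw [one_div_div]
          linarith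
        obtain ⟨y, hy, hxy⟩ := hP.2.2.1 x hx hzx
        exact ⟨y, hy, hxy.trans hε'lt.le⟩
      choose! Φ hΦmem hΦd using step
      set x : ℕ → Z := fun k => Nat.rec a (fun k xk => Φ k xk) k with hxdef
      have hxsucc : ∀ k, x (k+1) = Φ k (x k) := fun k => rfl
      have hx0 : x 0 = a := rfl
      have hinv : ∀ k, x k ∈ F (m k) ∧ dist a (x k) ≤ ε * (1 - (1/2)^k) := by
        intro k
        induction k with
        | zero => exact ⟨hx0 ▸ ha, by rw [hx0]; simp⟩
        | succ k ih =>
          have hpow : (0:ℝ) ≤ (1/2:ℝ)^k := by positivity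
          have hdz : dist z (x k) ≤ 1/(2*ε) + ε := by
            calc dist z (x k) ≤ dist z a + dist a (x k) := dist_triangle _ _ _
              _ ≤ 1/(2*ε) + ε := by nlinarith [ih.2]
          have h1 := hΦmem k (x k) ih.1 hdz
          have h2 := hΦd k (x k) ih.1 hdz
          rw [← hxsucc k] at h1 h2
          refine ⟨h1, ?_⟩
          calc dist a (x (k+1)) ≤ dist a (x k) + dist (x k) (x (k+1)) := dist_triangle _ _ _
            _ ≤ ε*(1-(1/2)^k) + ε*(1/2)^(k+1) := add_le_add ih.2 h2
            _ = ε*(1-(1/2)^(k+1)) := by ring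
      have hgeo : ∀ k, dist (x k) (x (k+1)) ≤ (ε/2) * (1/2)^k := by
        intro k
        have hpow : (0:ℝ) ≤ (1/2:ℝ)^k := by positivity
        have hdz : dist z (x k) ≤ 1/(2*ε) + ε := by
          calc dist z (x k) ≤ dist z a + dist a (x k) := dist_triangle _ _ _
            _ ≤ 1/(2*ε) + ε := by nlinarith [(hinv k).2]
        have h2 := hΦd k (x k) (hinv k).1 hdz
        rw [← hxsucc k] at h2
        calc dist (x k) (x (k+1)) ≤ ε * (1/2)^(k+1) := h2
          _ = (ε/2) * (1/2)^k := by ring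
      have hcau : CauchySeq x := cauchySeq_of_le_geometric (1/2) (ε/2) (by norm_num) hgeo
      obtain ⟨c, hc⟩ := cauchySeq_tendsto_of_complete hcau
      have hdac : dist a c ≤ 2*ε := by
        have := dist_le_of_le_geometric_of_tendsto₀ (1/2) (ε/2) (by norm_num) hgeo hc
        calc dist a c = dist (x 0) c := by rw [hx0]
          _ ≤ (ε/2) / (1 - 1/2) := this
          _ = ε := by ring
          _ ≤ 2*ε := by linarith
      refine ⟨c, ?_, hdac⟩
      rw [hC, Set.mem_iInter]
      intro M
      refine mem_closure_of_tendsto hc ?_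
      filter_upwards [Filter.eventually_ge_atTop M] with k hk
      exact Set.mem_iUnion.2 ⟨m k, Set.mem_iUnion.2 ⟨hk.trans (hmk k), (hinv k).1⟩⟩
    -- Direction B : points of `C` are close to `F n`
    have dirB : ∀ c ∈ C, dist z c ≤ 1/(2*ε) → ∃ a ∈ F n, dist c a ≤ 2*ε := by
      intro c hc hzc
      have hc0 : c ∈ closure (⋃ p, ⋃ (_ : ψ 0 ≤ p), F p) := by
        rw [hC, Set.mem_iInter] at hc; exact hc (ψ 0)
      rw [Metric.mem_closure_iff] at hc0
      obtain ⟨y, hy, hcy⟩ := hc0 (ε/2) (by positivity)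
      obtain ⟨p, hp⟩ := Set.mem_iUnion.1 hy
      obtain ⟨hpN, hyp⟩ := Set.mem_iUnion.1 hp
      have hpn : HzGen dist z (F p) (F n) < ε * (1/2)^(0+1) :=
        hg 0 p ((hgψ 0).trans hpN) n ((hgψ 0).trans hn)
      obtain ⟨ε', hε'lt, hP⟩ := exists_P_of_lt z hpn (hbound 0)
      have hε'pos := hP.1
      have hε'le : ε' ≤ ε/2 := by
        have : ε * (1/2:ℝ)^(0+1) = ε/2 := by ring
        linarith [hε'lt.trans_le this.le]
      have key2 : 1/(2*ε) + ε/2 ≤ 2/ε := by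
        rw [div_add' _ _ _ (by positivity), div_le_div_iff₀ (by positivity) hε]
        nlinarith [mul_pos hε hε, mul_lt_mul_of_pos_left hε4 hε,
          mul_nonneg (mul_nonneg hε.le hε.le) hε.le]
      have hzy : dist z y ≤ 1/ε' := by
        have h2 : (1:ℝ)/(ε/2) ≤ 1/ε' := one_div_le_one_div_of_le hε'pos hε'le
        have h3 : (1:ℝ)/(ε/2) = 2/ε := by rw [one_div_div]
        calc dist z y ≤ dist z c + dist c y := dist_triangle _ _ _
          _ ≤ 1/(2*ε) + ε/2 := by linarith
          _ ≤ 2/ε := key2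
          _ ≤ 1/ε' := by linarith
      obtain ⟨b, hb, hyb⟩ := hP.2.2.1 y hyp hzy
      refine ⟨b, hb, ?_⟩
      calc dist c b ≤ dist c y + dist y b := dist_triangle _ _ _
        _ ≤ ε/2 + ε/2 := add_le_add hcy.le (hyb.trans (by linarith))
        _ ≤ 2*ε := by linarith
    exact HzGen_le_of_P z ⟨by linarith, by linarith, dirA, dirB⟩
  refine ⟨C, hCclosed, ?_⟩
  rw [Metric.tendsto_atTop]
  intro δ hδ
  obtain ⟨N, hN⟩ := main (min (δ/4) (1/8)) (lt_min (by linarith) (by norm_num))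
    (lt_of_le_of_lt (min_le_right _ _) (by norm_num))
  refine ⟨N, fun n hn => ?_⟩
  rw [Real.dist_eq, sub_zero, abs_of_nonneg (HzGen_nonneg z _ _)]
  calc HzGen dist z (F n) C ≤ 2 * min (δ/4) (1/8) := hN n hn
    _ ≤ 2 * (δ/4) := by
        have := min_le_left (δ/4) (1/8:ℝ); linarith
    _ < δ := by linarith

end main


theorem stmt_8 {Z : Type*} [MetricSpace Z] (z : Z) :
    (∀ A : Set Z, HzGen dist z A A = 0) ∧
    (∀ A B : Set Z, HzGen dist z A B = HzGen dist z B A) ∧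
    (∀ A B C : Set Z, HzGen dist z A C ≤ HzGen dist z A B + HzGen dist z B C) ∧
    (∀ A B : Set Z, IsClosed A → IsClosed B → HzGen dist z A B = 0 → A = B) ∧
    (CompleteSpace Z → ∀ F : ℕ → Set Z, (∀ n, IsClosed (F n)) →
      (∀ ε : ℝ, 0 < ε → ∃ N, ∀ m ≥ N, ∀ n ≥ N, HzGen dist z (F m) (F n) < ε) →
      ∃ C : Set Z, IsClosed C ∧
        Filter.Tendsto (fun n => HzGen dist z (F n) C) Filter.atTop (nhds 0)) := by
  refine ⟨HzGen_self z, HzGen_comm z, HzGen_triangle z, ?_, ?_⟩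
  · exact fun A B hA hB h => HzGen_eq_zero_closed z hA hB h
  · intro hcomp F _ hcauchy
    exact HzGen_complete z F hcauchy
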